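/- Let μ>0 with 1−4π²μj²≠0 for all integers j≥1, let ℓ≥1 be the number of integers j≥1 with 1−4π²μj²>0, and define ω⁰∈ℝ^ℓ by ω⁰_j=j√(1−4π²μj²) (all nonzero) and F(k,j)=(ω⁰·k)²−j²(1−4π²μj²). Let A∈ℝ^ℓ with A_i≠0 for all i and set U₁(θ,x)=Σ_{i=1}^ℓ A_i cos(2πθ_i)cos(2πix). Let R(θ,x) be a trigonometric polynomial that is a finite real linear combination of the functions cos(2πk·θ)cos(2πjx) with k∈ℤ^ℓ and j≥1, and assume F(k,j)≠0 for every mode (k,j) appearing in R other than the kernel modes (±e_i,i), i=1,…,ℓ. Then there exist a unique ω'∈ℝ^ℓ and a function U, unique among finite real linear combinations of the functions cos(2πk·θ)cos(2πjx) with F(k,j)≠0, such that (ω⁰·∂_θ)²U − ∂ₓ²U − μ∂ₓ⁴U + 2(ω'·∂_θ)(ω⁰·∂_θ)U₁ = R on ℝ^{ℓ+1}. -/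

import Mathlib

open Real

noncomputable section

/-- Directional derivative in the angle variables: `(ω·∂_θ)f`. -/
def thetaD {ℓ : ℕ} (ω : Fin ℓ → ℝ) (f : (Fin ℓ → ℝ) → ℝ → ℝ) :
    (Fin ℓ → ℝ) → ℝ → ℝ :=
  fun θ x => fderiv ℝ (fun θ' => f θ' x) θ ω

/-- Partial derivative in the space variable: `∂_x f`. -/
def xD {ℓ : ℕ} (f : (Fin ℓ → ℝ) → ℝ → ℝ) : (Fin ℓ → ℝ) → ℝ → ℝ :=
  fun θ x => deriv (fun y => f θ y) x

/-- The vector of elliptic linear frequencies `ω⁰_j = j √(1 − 4π²μj²)`, `j = 1,…,ℓ`. -/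
def omega0 (μ : ℝ) (ℓ : ℕ) : Fin ℓ → ℝ :=
  fun i => ((i : ℕ) + 1 : ℝ) * Real.sqrt (1 - 4 * π ^ 2 * μ * ((i : ℕ) + 1 : ℝ) ^ 2)

/-- `F(k,j) = (ω⁰·k)² − j²(1 − 4π²μj²)`. -/
def Fres (μ : ℝ) (ℓ : ℕ) (k : Fin ℓ → ℤ) (j : ℤ) : ℝ :=
  (∑ i, omega0 μ ℓ i * (k i : ℝ)) ^ 2 - (j : ℝ) ^ 2 * (1 - 4 * π ^ 2 * μ * (j : ℝ) ^ 2)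

/-- The exceptional (kernel) modes `(k,j) = (±e_i, i)`, `i = 1,…,ℓ`. -/
def ExcMode (ℓ : ℕ) (k : Fin ℓ → ℤ) (j : ℤ) : Prop :=
  ∃ i : Fin ℓ, (k = Pi.single i 1 ∨ k = -Pi.single i 1) ∧ j = (i : ℕ) + 1

/-- A finite real linear combination of modes `cos(2πk·θ)cos(2πjx)` with `F(k,j) ≠ 0`. -/
def IsNonresonantTrigPoly (μ : ℝ) (ℓ : ℕ) (U : (Fin ℓ → ℝ) → ℝ → ℝ) : Prop :=
  ∃ (Λ : Finset ((Fin ℓ → ℤ) × ℤ)) (c : (Fin ℓ → ℤ) × ℤ → ℝ),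
    (∀ p ∈ Λ, Fres μ ℓ p.1 p.2 ≠ 0) ∧
    ∀ θ x, U θ x = ∑ p ∈ Λ,
      c p * Real.cos (2 * π * ∑ i, (p.1 i : ℝ) * θ i) * Real.cos (2 * π * (p.2 : ℝ) * x)

/-- The first-order Lindstedt term `U₁(θ,x) = Σ_i A_i cos(2πθ_i)cos(2πix)`. -/
def lindU1 {ℓ : ℕ} (A : Fin ℓ → ℝ) : (Fin ℓ → ℝ) → ℝ → ℝ :=
  fun θ x => ∑ i, A i * Real.cos (2 * π * θ i) * Real.cos (2 * π * ((i : ℕ) + 1 : ℝ) * x)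

/-!
On a mode `cos(2πk·θ) cos(2πjx)` the operator `M₀` acts as multiplication by `−4π²F(k,j)`, and
`2(ω'·∂_θ)(ω⁰·∂_θ)U₁` is the combination of the kernel modes `(e_i, i)` with coefficients
`−8π²ω⁰_i ω'_i A_i`. Solving the equation is thus a comparison of coefficients, legitimate up to
the sign symmetry `(k, j) ↦ (±k, ±j)` of the modes: `cos a cos b` is the average of the four
characters `exp(i(±a ± b))` and distinct characters are linearly independent (Dedekind), so a
cosine polynomial vanishes iff its sign-symmetrised coefficients do, and then its coefficients
may be multiplied by any sign-invariant weight. Existence divides the nonresonant coefficients of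
`R` by `−4π²F` and reads `ω'` off its coefficients on the exceptional modes `(±e_i, i)`. For
uniqueness, the difference of two solutions vanishes; a weight supported on resonant modes
isolates each `ω'_i`, and then the weight `1/(−4π²F)` shows that the two `U` agree.
-/

theorem Finsupp.support_pointwise_smul_subset {α R : Type*} [Semiring R]
    (g : α → R) (c : α →₀ R) : (g • c).support ⊆ c.support := by
  intro q
  simp only [mem_support_iff, coe_pointwise_smul, smul_eq_mul]
  exact right_ne_zero_of_mul

theorem Finsupp.linearCombination_pointwise_smul {α R M : Type*} [CommSemiring R]
    [AddCommMonoid M] [Module R M] (v : α → M) (g : α → R) (c : α →₀ R) :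
    linearCombination R v (g • c) = linearCombination R (fun a => g a • v a) c := by
  rw [linearCombination_apply_of_mem_supported R ((mem_supported R _).2
      (mod_cast support_pointwise_smul_subset g c)),
    linearCombination_apply_of_mem_supported R ((mem_supported R c).2 subset_rfl)]
  simp only [coe_pointwise_smul, Pi.smul_apply', smul_eq_mul, mul_smul]
  exact Finset.sum_congr rfl fun _ _ => smul_comm _ _ _

theorem Finsupp.support_sum_single_subset {α β M : Type*} [DecidableEq β] [AddCommMonoid M]
    (s : Finset α) (f : α → β) (c : α → M) :
    (∑ a ∈ s, single (f a) (c a)).support ⊆ s.image f :=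
  support_finsetSum.trans <| Finset.biUnion_subset.2 fun _ ha =>
    support_single_subset.trans <| Finset.singleton_subset_iff.2 (Finset.mem_image_of_mem f ha)

namespace Lindstedt

open Finset

variable {ι : Type*}

def signFlip (s : ℤˣ × ℤˣ) : Equiv.Perm ((ι → ℤ) × ℤ) :=
  (MulAction.toPerm s.1).prodCongr (MulAction.toPerm s.2)

lemma signFlip_apply (s : ℤˣ × ℤˣ) (q : (ι → ℤ) × ℤ) :
    signFlip s q = ((s.1 : ℤ) • q.1, (s.2 : ℤ) * q.2) := rfl

lemma cos_units_mul (s : ℤˣ) (t : ℝ) : Real.cos ((s : ℤ) * t) = Real.cos t := by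
  rcases Int.units_eq_one_or s with rfl | rfl <;> simp

def signSum (c : (ι → ℤ) × ℤ →₀ ℝ) : (ι → ℤ) × ℤ →₀ ℝ :=
  ∑ s, c.equivMapDomain (signFlip s)

lemma signSum_pointwise_smul {g : (ι → ℤ) × ℤ → ℝ} (hg : ∀ s q, g (signFlip s q) = g q)
    (c : (ι → ℤ) × ℤ →₀ ℝ) : signSum (g • c) = g • signSum c := by
  ext r
  have hg' (s : ℤˣ × ℤˣ) : g ((signFlip s).symm r) = g r := by
    rw [← hg s, Equiv.apply_symm_apply]
  simp [signSum, Finsupp.finsetSum_apply, Finsupp.equivMapDomain_apply, hg', mul_sum]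

variable [Fintype ι]

def phase (k : ι → ℤ) : (ι → ℝ) →L[ℝ] ℝ :=
  (2 * π) • ∑ i, (k i : ℝ) • ContinuousLinearMap.proj i

lemma phase_apply (k : ι → ℤ) (θ : ι → ℝ) : phase k θ = 2 * π * ∑ i, (k i : ℝ) * θ i := by
  simp [phase, mul_sum]

lemma phase_zsmul (n : ℤ) (k : ι → ℤ) (θ : ι → ℝ) : phase (n • k) θ = n * phase k θ := by
  simp only [phase_apply, Pi.smul_apply, smul_eq_mul, Int.cast_mul, mul_sum]
  exact sum_congr rfl fun _ _ => by ring

lemma phase_single [DecidableEq ι] (i : ι) (ω : ι → ℝ) :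
    phase (Pi.single i 1) ω = 2 * π * ω i := by
  simp [phase_apply, Pi.single_apply]

def mode (q : (ι → ℤ) × ℤ) (θ : ι → ℝ) (x : ℝ) : ℝ :=
  Real.cos (phase q.1 θ) * Real.cos (2 * π * q.2 * x)

lemma mode_signFlip (s : ℤˣ × ℤˣ) (q : (ι → ℤ) × ℤ) : mode (signFlip s q) = mode q := by
  funext θ x
  rw [mode, mode, signFlip_apply, phase_zsmul, cos_units_mul, Int.cast_mul,
    show 2 * π * ((s.2 : ℤ) * (q.2 : ℝ)) * x = (s.2 : ℤ) * (2 * π * q.2 * x) by ring,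
    cos_units_mul]

def cosPoly : ((ι → ℤ) × ℤ →₀ ℝ) →ₗ[ℝ] (ι → ℝ) → ℝ → ℝ :=
  Finsupp.linearCombination ℝ mode

lemma cosPoly_apply_of_support_subset {c : (ι → ℤ) × ℤ →₀ ℝ} {s : Finset ((ι → ℤ) × ℤ)}
    (hs : c.support ⊆ s) (θ : ι → ℝ) (x : ℝ) :
    cosPoly c θ x = ∑ q ∈ s, c q * mode q θ x := by
  rw [cosPoly, Finsupp.linearCombination_apply_of_mem_supported ℝ
    ((Finsupp.mem_supported ℝ c).2 (mod_cast hs))]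
  simp [Finset.sum_apply]

lemma cosPoly_apply (c : (ι → ℤ) × ℤ →₀ ℝ) (θ : ι → ℝ) (x : ℝ) :
    cosPoly c θ x = ∑ q ∈ c.support, c q * mode q θ x :=
  cosPoly_apply_of_support_subset subset_rfl θ x

lemma cosPoly_eq_fun_sum (c : (ι → ℤ) × ℤ →₀ ℝ) :
    cosPoly c = fun θ x => ∑ q ∈ c.support,
      c q * Real.cos (phase q.1 θ) * Real.cos (2 * π * q.2 * x) :=
  funext₂ fun θ x => by simp only [cosPoly_apply, mode, mul_assoc]

lemma cosPoly_sum_single {α : Type*} (s : Finset α) (f : α → (ι → ℤ) × ℤ) (c : α → ℝ)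
    (θ : ι → ℝ) (x : ℝ) :
    cosPoly (∑ a ∈ s, Finsupp.single (f a) (c a)) θ x = ∑ a ∈ s, c a * mode (f a) θ x := by
  simp [cosPoly, Finset.sum_apply]

def expChar (q : (ι → ℤ) × ℤ) : Multiplicative ((ι → ℝ) × ℝ) →* ℂ where
  toFun z := Complex.exp ((phase q.1 z.toAdd.1 + 2 * π * q.2 * z.toAdd.2 : ℝ) * Complex.I)
  map_one' := by simp
  map_mul' z w := by
    simp only [toAdd_mul, Prod.fst_add, Prod.snd_add, map_add, ← Complex.exp_add]
    push_cast; ring_nf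

lemma expChar_apply (q : (ι → ℤ) × ℤ) (θ : ι → ℝ) (x : ℝ) :
    expChar q (.ofAdd (θ, x)) =
      Complex.exp (phase q.1 θ * Complex.I) * Complex.exp ((2 * π * q.2 * x : ℝ) * Complex.I) := by
  simp only [expChar, MonoidHom.coe_mk, OneHom.coe_mk, toAdd_ofAdd, ← Complex.exp_add]
  push_cast; ring_nf

lemma sum_units_cexp (t : ℝ) :
    ∑ s : ℤˣ, Complex.exp (((s : ℤ) * t : ℝ) * Complex.I) = 2 * Real.cos t := by
  rw [show (univ : Finset ℤˣ) = {1, -1} from rfl, sum_pair (by decide), Complex.ofReal_cos,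
    Complex.two_cos]
  push_cast; ring_nf

lemma sum_expChar_signFlip (q : (ι → ℤ) × ℤ) (θ : ι → ℝ) (x : ℝ) :
    ∑ s, expChar (signFlip s q) (.ofAdd (θ, x)) = 4 * mode q θ x := by
  have h (s : ℤˣ) : (2 * π * (((s : ℤ) * q.2 : ℤ) : ℝ) * x) = (s : ℤ) * (2 * π * q.2 * x) := by
    push_cast; ring
  simp only [expChar_apply, signFlip_apply, phase_zsmul, h, Fintype.sum_prod_type, ← sum_mul_sum,
    sum_units_cexp, mode]
  push_cast; ring

lemma int_eq_of_forall_cexp_eq {a b : ℤ}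
    (h : ∀ t : ℝ, Complex.exp ((2 * π * a * t : ℝ) * Complex.I)
      = Complex.exp ((2 * π * b * t : ℝ) * Complex.I)) : a = b := by
  by_contra hab
  have hab' : (a - b : ℂ) ≠ 0 := sub_ne_zero.2 (by exact_mod_cast hab)
  obtain ⟨n, hn⟩ := Complex.exp_eq_exp_iff_exists_int.1 (h (1 / (2 * (a - b))))
  push_cast at hn
  field_simp at hn
  have : (2 * n - 1 : ℂ) = 0 :=
    (mul_eq_zero.1 (by linear_combination -hn : (a - b) * (2 * n - 1 : ℂ) = 0)).resolve_left hab'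
  have : 2 * n - 1 = 0 := by exact_mod_cast this
  omega

lemma expChar_injective : Function.Injective (expChar (ι := ι)) := by
  classical
  intro q q' h
  have h' (θ : ι → ℝ) (x : ℝ) := DFunLike.congr_fun h (.ofAdd (θ, x))
  refine Prod.ext (funext fun i => int_eq_of_forall_cexp_eq fun t => ?_)
    (int_eq_of_forall_cexp_eq fun t => ?_)
  · simpa [expChar_apply, phase_apply, Pi.single_apply, mul_assoc] using h' (Pi.single i t) 0
  · simpa [expChar_apply] using h' 0 t

lemma linearIndependent_expChar :
    LinearIndependent ℝ (fun q : (ι → ℤ) × ℤ => ⇑(expChar q)) :=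
  ((linearIndependent_monoidHom _ ℂ).comp expChar expChar_injective).restrict_scalars' ℝ

lemma linearCombination_expChar_signSum (c : (ι → ℤ) × ℤ →₀ ℝ) (θ : ι → ℝ) (x : ℝ) :
    Finsupp.linearCombination ℝ (fun q => ⇑(expChar q)) (signSum c) (.ofAdd (θ, x))
      = 4 * cosPoly c θ x := by
  simp only [signSum, map_sum, Finsupp.linearCombination_equivMapDomain]
  simp only [Finsupp.linearCombination_apply, Finsupp.sum, Finset.sum_apply, Pi.smul_apply,
    Function.comp_apply, Complex.real_smul, cosPoly_apply]
  rw [Finset.sum_comm]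
  simp only [← mul_sum, sum_expChar_signFlip]
  push_cast
  rw [mul_sum]
  exact sum_congr rfl fun _ _ => by ring

theorem cosPoly_eq_zero_iff (c : (ι → ℤ) × ℤ →₀ ℝ) : cosPoly c = 0 ↔ signSum c = 0 := by
  constructor
  · intro hc
    refine linearIndependent_iff.1 linearIndependent_expChar _ (funext fun z => ?_)
    rw [show z = .ofAdd (z.toAdd.1, z.toAdd.2) from rfl, linearCombination_expChar_signSum, hc]
    simp
  · intro hc
    funext θ x
    have h := linearCombination_expChar_signSum c θ x
    rw [hc, map_zero] at h
    exact_mod_cast (mul_eq_zero.1 h.symm).resolve_left (by norm_num)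

theorem cosPoly_pointwise_smul_eq_zero {c : (ι → ℤ) × ℤ →₀ ℝ} (hc : cosPoly c = 0)
    {g : (ι → ℤ) × ℤ → ℝ} (hg : ∀ s q, g (signFlip s q) = g q) : cosPoly (g • c) = 0 := by
  rw [cosPoly_eq_zero_iff] at hc ⊢
  rw [signSum_pointwise_smul hg, hc]
  exact smul_zero (A := (ι → ℤ) × ℤ →₀ ℝ) g

theorem linearCombination_eq_zero_of_cosPoly_eq_zero {c : (ι → ℤ) × ℤ →₀ ℝ}
    (hc : cosPoly c = 0) {g : (ι → ℤ) × ℤ → ℝ} (hg : ∀ s q, g (signFlip s q) = g q) :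
    Finsupp.linearCombination ℝ g c = 0 := by
  have h := congrFun₂ (cosPoly_pointwise_smul_eq_zero hc hg) 0 0
  rw [cosPoly_apply_of_support_subset (Finsupp.support_pointwise_smul_subset g c)] at h
  simpa [Finsupp.linearCombination_apply, Finsupp.sum, mul_comm, mode] using h

variable {ℓ : ℕ}

lemma thetaD_sum_mul_comp {α : Type*} (s : Finset α) (c : α → ℝ) (k : α → Fin ℓ → ℤ)
    (g : α → ℝ → ℝ) {f f' : ℝ → ℝ} (hf : ∀ t, HasDerivAt f (f' t) t) (ω : Fin ℓ → ℝ) :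
    thetaD ω (fun θ x => ∑ a ∈ s, c a * f (phase (k a) θ) * g a x) =
      fun θ x => ∑ a ∈ s, c a * phase (k a) ω * f' (phase (k a) θ) * g a x := by
  funext θ x
  have h (a) (_ : a ∈ s) : HasFDerivAt (fun θ => c a * f (phase (k a) θ) * g a x)
      ((c a * f' (phase (k a) θ) * g a x) • phase (k a)) θ := by
    refine ((((hf _).comp_hasFDerivAt θ (phase (k a)).hasFDerivAt).const_mul (c a)).mul_const
      (g a x)).congr_fderiv ?_
    rw [smul_smul, smul_smul]
    ring_nf
  rw [thetaD, (HasFDerivAt.fun_sum h).fderiv]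
  simp only [_root_.sum_apply, smul_apply, smul_eq_mul]
  exact sum_congr rfl fun _ _ => by ring

lemma xD_sum_mul_comp {α : Type*} (s : Finset α) (c : α → ℝ) (h : α → (Fin ℓ → ℝ) → ℝ)
    (r : α → ℝ) {f f' : ℝ → ℝ} (hf : ∀ t, HasDerivAt f (f' t) t) :
    xD (fun θ x => ∑ a ∈ s, c a * h a θ * f (r a * x)) =
      fun θ x => ∑ a ∈ s, c a * r a * h a θ * f' (r a * x) := by
  funext θ x
  have hd (a) (_ : a ∈ s) : HasDerivAt (fun x => c a * h a θ * f (r a * x))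
      (c a * r a * h a θ * f' (r a * x)) x := by
    refine (((hf _).comp x ((hasDerivAt_id x).const_mul (r a))).const_mul
      (c a * h a θ)).congr_deriv ?_
    simp only [id, mul_one]
    ring
  exact (HasDerivAt.fun_sum hd).deriv

lemma hasDerivAt_neg_sin (t : ℝ) : HasDerivAt (fun t => -Real.sin t) (-Real.cos t) t :=
  (Real.hasDerivAt_sin t).neg

lemma thetaD_thetaD_cosPoly (ω ω' : Fin ℓ → ℝ) (c : (Fin ℓ → ℤ) × ℤ →₀ ℝ) :
    thetaD ω (thetaD ω' (cosPoly c)) =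
      cosPoly ((fun q : (Fin ℓ → ℤ) × ℤ => -(phase q.1 ω * phase q.1 ω')) • c) := by
  rw [cosPoly_eq_fun_sum c, thetaD_sum_mul_comp _ _ _ _ Real.hasDerivAt_cos,
    thetaD_sum_mul_comp _ _ _ _ hasDerivAt_neg_sin]
  funext θ x
  rw [cosPoly_apply_of_support_subset (Finsupp.support_pointwise_smul_subset _ c)]
  exact sum_congr rfl fun _ _ => by
    simp only [Finsupp.coe_pointwise_smul, smul_eq_mul, Pi.mul_apply, mode]; ring

lemma xD_xD_cosPoly (c : (Fin ℓ → ℤ) × ℤ →₀ ℝ) :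
    xD (xD (cosPoly c)) = cosPoly ((fun q : (Fin ℓ → ℤ) × ℤ => -(2 * π * q.2) ^ 2) • c) := by
  rw [cosPoly_eq_fun_sum c, xD_sum_mul_comp _ _ _ _ Real.hasDerivAt_cos,
    xD_sum_mul_comp _ _ _ _ hasDerivAt_neg_sin]
  funext θ x
  rw [cosPoly_apply_of_support_subset (Finsupp.support_pointwise_smul_subset _ c)]
  exact sum_congr rfl fun _ _ => by
    simp only [Finsupp.coe_pointwise_smul, smul_eq_mul, Pi.mul_apply, mode]; ring

def kernelMode (i : Fin ℓ) : (Fin ℓ → ℤ) × ℤ := (Pi.single i 1, (i : ℕ) + 1)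

def kernelCoeff (β : Fin ℓ → ℝ) : (Fin ℓ → ℤ) × ℤ →₀ ℝ :=
  ∑ i, Finsupp.single (kernelMode i) (β i)

lemma lindU1_eq_cosPoly (A : Fin ℓ → ℝ) : lindU1 A = cosPoly (kernelCoeff A) := by
  funext θ x
  rw [kernelCoeff, cosPoly_sum_single]
  simp [lindU1, mode, kernelMode, phase_single, mul_assoc]

lemma pointwise_smul_kernelCoeff (g : (Fin ℓ → ℤ) × ℤ → ℝ) (β : Fin ℓ → ℝ) :
    g • kernelCoeff β = kernelCoeff fun i => g (kernelMode i) * β i := by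
  ext q
  simp only [kernelCoeff, Finsupp.coe_pointwise_smul, Pi.smul_apply', Finsupp.finsetSum_apply,
    Finsupp.single_apply, smul_eq_mul, mul_sum]
  exact sum_congr rfl fun i _ => by split_ifs with h <;> simp [h]

lemma linearCombination_kernelCoeff (g : (Fin ℓ → ℤ) × ℤ → ℝ) (β : Fin ℓ → ℝ) :
    Finsupp.linearCombination ℝ g (kernelCoeff β) = ∑ i, β i * g (kernelMode i) := by
  simp [kernelCoeff, map_sum]

lemma cosPoly_eq_cosPoly_kernelCoeff {e : (Fin ℓ → ℤ) × ℤ →₀ ℝ}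
    (he : ∀ q ∈ e.support, ExcMode ℓ q.1 q.2) :
    cosPoly e = cosPoly (kernelCoeff fun i => ∑ s : ℤˣ, e (signFlip (s, 1) (kernelMode i))) := by
  classical
  set f : Fin ℓ × ℤˣ → (Fin ℓ → ℤ) × ℤ := fun p => signFlip (p.2, 1) (kernelMode p.1)
  have hf : Function.Injective f := by
    rintro ⟨i, s⟩ ⟨i', s'⟩ h
    simp only [f, signFlip_apply, kernelMode, Prod.mk.injEq, Units.val_one, one_mul] at h
    obtain rfl : i = i' := Fin.ext (by have := h.2; omega)
    simpa [Units.ext_iff] using congrFun h.1 i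
  have hsupp : e.support ⊆ univ.image f := by
    intro q hq
    obtain ⟨i, hk, hj⟩ := he q hq
    obtain ⟨s, hs⟩ : ∃ s : ℤˣ, q.1 = (s : ℤ) • Pi.single i 1 :=
      hk.elim (fun h => ⟨1, by simp [h]⟩) fun h => ⟨-1, by simp [h]⟩
    exact mem_image.2 ⟨(i, s), mem_univ _, Prod.ext (by simp [f, signFlip_apply, kernelMode, hs])
      (by simp [f, signFlip_apply, kernelMode, hj])⟩
  funext θ x
  rw [cosPoly_apply_of_support_subset hsupp, sum_image fun p _ p' _ h => hf h, kernelCoeff,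
    cosPoly_sum_single, Fintype.sum_prod_type]
  simp only [f, mode_signFlip, ← sum_mul]

def symbol (μ : ℝ) (ℓ : ℕ) (q : (Fin ℓ → ℤ) × ℤ) : ℝ := -(4 * π ^ 2) * Fres μ ℓ q.1 q.2

lemma Fres_signFlip (μ : ℝ) (s : ℤˣ × ℤˣ) (q : (Fin ℓ → ℤ) × ℤ) :
    Fres μ ℓ (signFlip s q).1 (signFlip s q).2 = Fres μ ℓ q.1 q.2 := by
  obtain ⟨s₁, s₂⟩ := s
  rcases Int.units_eq_one_or s₁ with rfl | rfl <;> rcases Int.units_eq_one_or s₂ with rfl | rfl <;>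
    simp [Fres, signFlip_apply]

lemma symbol_signFlip (μ : ℝ) (s : ℤˣ × ℤˣ) (q : (Fin ℓ → ℤ) × ℤ) :
    symbol μ ℓ (signFlip s q) = symbol μ ℓ q := by
  rw [symbol, symbol, Fres_signFlip]

lemma omega0_ne_zero {μ : ℝ}
    (hpos : ∀ i : Fin ℓ, 0 < 1 - 4 * π ^ 2 * μ * ((i : ℕ) + 1 : ℝ) ^ 2) (i : Fin ℓ) :
    omega0 μ ℓ i ≠ 0 :=
  mul_ne_zero (by positivity) (Real.sqrt_pos.2 (hpos i)).ne'

lemma Fres_kernelMode {μ : ℝ}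
    (hpos : ∀ i : Fin ℓ, 0 < 1 - 4 * π ^ 2 * μ * ((i : ℕ) + 1 : ℝ) ^ 2) (i : Fin ℓ) :
    Fres μ ℓ (kernelMode i).1 (kernelMode i).2 = 0 := by
  have hsq : omega0 μ ℓ i ^ 2 =
      ((i : ℕ) + 1 : ℝ) ^ 2 * (1 - 4 * π ^ 2 * μ * ((i : ℕ) + 1 : ℝ) ^ 2) := by
    rw [omega0, mul_pow, Real.sq_sqrt (hpos i).le]
  simp [Fres, kernelMode, Pi.single_apply, hsq]

lemma isNonresonantTrigPoly_iff {μ : ℝ} {U : (Fin ℓ → ℝ) → ℝ → ℝ} :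
    IsNonresonantTrigPoly μ ℓ U ↔
      ∃ c : (Fin ℓ → ℤ) × ℤ →₀ ℝ, (∀ q ∈ c.support, Fres μ ℓ q.1 q.2 ≠ 0) ∧ U = cosPoly c := by
  constructor
  · rintro ⟨Λ, c, hF, hU⟩
    refine ⟨∑ q ∈ Λ, Finsupp.single q (c q), fun q hq => ?_, funext₂ fun θ x => ?_⟩
    · exact hF q (by simpa using Finsupp.support_sum_single_subset Λ id c hq)
    · simp [hU, cosPoly_sum_single, mode, phase_apply, mul_assoc]
  · rintro ⟨c, hc, rfl⟩
    exact ⟨c.support, c, hc, fun θ x => by simp [cosPoly_apply, mode, phase_apply, mul_assoc]⟩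

def lindstedtLHS (μ : ℝ) (ω A : Fin ℓ → ℝ) (U : (Fin ℓ → ℝ) → ℝ → ℝ) :
    (Fin ℓ → ℝ) → ℝ → ℝ :=
  fun θ x => thetaD (omega0 μ ℓ) (thetaD (omega0 μ ℓ) U) θ x - xD (xD U) θ x
    - μ * xD (xD (xD (xD U))) θ x + 2 * thetaD ω (thetaD (omega0 μ ℓ) (lindU1 A)) θ x

theorem lindstedtLHS_cosPoly (μ : ℝ) (ω A : Fin ℓ → ℝ) (c : (Fin ℓ → ℤ) × ℤ →₀ ℝ) :
    lindstedtLHS μ ω A (cosPoly c) = cosPoly (symbol μ ℓ • c +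
      kernelCoeff fun i => -(8 * π ^ 2) * omega0 μ ℓ i * ω i * A i) := by
  set θθ : (Fin ℓ → ℤ) × ℤ → ℝ := fun q => -(phase q.1 (omega0 μ ℓ) * phase q.1 (omega0 μ ℓ))
  set xx : (Fin ℓ → ℤ) × ℤ → ℝ := fun q => -(2 * π * q.2) ^ 2
  have hsymbol : symbol μ ℓ • c = θθ • c - xx • c - μ • (xx • xx • c) := by
    ext q
    simp only [symbol, Fres, θθ, xx, phase_apply, Finsupp.coe_pointwise_smul, Finsupp.coe_sub,
      Finsupp.coe_smul, Pi.sub_apply, Pi.mul_apply, Pi.smul_apply, smul_eq_mul]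
    simp only [mul_comm (omega0 μ ℓ _)]
    ring
  have hker : (kernelCoeff fun i => -(8 * π ^ 2) * omega0 μ ℓ i * ω i * A i) = (2 : ℝ) •
      ((fun q : (Fin ℓ → ℤ) × ℤ => -(phase q.1 ω * phase q.1 (omega0 μ ℓ))) • kernelCoeff A) := by
    rw [pointwise_smul_kernelCoeff]
    simp only [kernelCoeff, smul_sum, Finsupp.smul_single, kernelMode, phase_single, smul_eq_mul]
    exact sum_congr rfl fun i _ => by ring_nf
  funext θ x
  simp only [lindstedtLHS, thetaD_thetaD_cosPoly, xD_xD_cosPoly, lindU1_eq_cosPoly, hsymbol, hker,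
    map_add, map_sub, map_smul, Pi.add_apply, Pi.sub_apply, Pi.smul_apply, smul_eq_mul]
  rfl

theorem exists_lindstedtLHS_cosPoly_eq {μ : ℝ} {A : Fin ℓ → ℝ}
    (hω0 : ∀ i, omega0 μ ℓ i ≠ 0) (hA : ∀ i, A i ≠ 0) {r : (Fin ℓ → ℤ) × ℤ →₀ ℝ}
    (hr : ∀ q ∈ r.support, Fres μ ℓ q.1 q.2 = 0 → ExcMode ℓ q.1 q.2) :
    ∃ (ω : Fin ℓ → ℝ) (c : (Fin ℓ → ℤ) × ℤ →₀ ℝ),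
      (∀ q ∈ c.support, Fres μ ℓ q.1 q.2 ≠ 0) ∧ lindstedtLHS μ ω A (cosPoly c) = cosPoly r := by
  classical
  set e := (fun q : (Fin ℓ → ℤ) × ℤ => if Fres μ ℓ q.1 q.2 = 0 then (1 : ℝ) else 0) • r
  set β : Fin ℓ → ℝ := fun i => ∑ s : ℤˣ, e (signFlip (s, 1) (kernelMode i))
  have he : cosPoly e = cosPoly (kernelCoeff β) := by
    refine cosPoly_eq_cosPoly_kernelCoeff fun q hq => ?_
    have hq' : (if Fres μ ℓ q.1 q.2 = 0 then (1 : ℝ) else 0) * r q ≠ 0 := by simpa [e] using hq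
    by_cases hF : Fres μ ℓ q.1 q.2 = 0
    · exact hr q (by simpa [hF] using hq') hF
    · simp [hF] at hq'
  -- `0⁻¹ = 0`: dividing by the symbol also discards the resonant part `e` of `r`
  refine ⟨fun i => β i / (-(8 * π ^ 2) * omega0 μ ℓ i * A i), (fun q => (symbol μ ℓ q)⁻¹) • r,
    fun q hq => ?_, ?_⟩
  · have hq' : (symbol μ ℓ q)⁻¹ * r q ≠ 0 := by simpa using hq
    simpa [symbol, Real.pi_ne_zero] using left_ne_zero_of_mul hq'
  · have hβ : (kernelCoeff fun i => -(8 * π ^ 2) * omega0 μ ℓ i *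
        (β i / (-(8 * π ^ 2) * omega0 μ ℓ i * A i)) * A i) = kernelCoeff β := by
      congr 1
      funext i
      field_simp [hω0 i, hA i, Real.pi_ne_zero]
    have hres : symbol μ ℓ • (fun q => (symbol μ ℓ q)⁻¹) • r + e = r := by
      ext q
      by_cases hF : Fres μ ℓ q.1 q.2 = 0
      · simp [e, symbol, hF]
      · have hs : symbol μ ℓ q ≠ 0 := by simp [symbol, hF, Real.pi_ne_zero]
        simp [e, hF, hs]
    rw [lindstedtLHS_cosPoly, hβ, map_add, ← he, ← map_add, hres]

lemma kernelCoeff_sub (β β' : Fin ℓ → ℝ) :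
    kernelCoeff β - kernelCoeff β' = kernelCoeff (β - β') := by
  simp [kernelCoeff, ← sum_sub_distrib, Finsupp.single_sub]

theorem kernelCoeff_eq_zero_of_cosPoly_eq_zero {μ : ℝ}
    (hker : ∀ i, Fres μ ℓ (kernelMode i).1 (kernelMode i).2 = 0)
    {d : (Fin ℓ → ℤ) × ℤ →₀ ℝ} {β : Fin ℓ → ℝ}
    (h : cosPoly (symbol μ ℓ • d + kernelCoeff β) = 0) : β = 0 := by
  classical
  funext i
  -- sign-invariant, kills `symbol μ ℓ • d`, and sees only `kernelMode i` among the kernel modes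
  set g : (Fin ℓ → ℤ) × ℤ → ℝ :=
    fun q => if q.2.natAbs = (i : ℕ) + 1 ∧ Fres μ ℓ q.1 q.2 = 0 then 1 else 0
  have hg (s : ℤˣ × ℤˣ) (q : (Fin ℓ → ℤ) × ℤ) : g (signFlip s q) = g q := by
    simp only [g, Fres_signFlip]
    simp [signFlip_apply, Int.natAbs_mul]
  have hgsymbol : Finsupp.linearCombination ℝ g (symbol μ ℓ • d) = 0 := by
    have hzero : (fun q => symbol μ ℓ q • g q) = 0 := funext fun q => by
      by_cases hF : Fres μ ℓ q.1 q.2 = 0 <;> simp [g, symbol, hF]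
    rw [Finsupp.linearCombination_pointwise_smul, hzero]
    simp
  have hgker (j : Fin ℓ) : g (kernelMode j) = if j = i then 1 else 0 := by
    have hFj := hker j
    simp only [kernelMode] at hFj
    have hj : (((j : ℕ) : ℤ) + 1).natAbs = (j : ℕ) + 1 := by omega
    simp only [g, kernelMode, hFj, and_true, hj, Nat.add_right_cancel_iff, Fin.ext_iff]
  simpa [hgsymbol, linearCombination_kernelCoeff, hgker] using
    linearCombination_eq_zero_of_cosPoly_eq_zero h hg

theorem cosPoly_eq_zero_of_cosPoly_symbol_smul_eq_zero {μ : ℝ} {d : (Fin ℓ → ℤ) × ℤ →₀ ℝ}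
    (hd : ∀ q, Fres μ ℓ q.1 q.2 = 0 → d q = 0) (h : cosPoly (symbol μ ℓ • d) = 0) :
    cosPoly d = 0 := by
  convert cosPoly_pointwise_smul_eq_zero h (g := fun q => (symbol μ ℓ q)⁻¹)
    (by simp [symbol_signFlip]) using 2
  ext q
  by_cases hF : Fres μ ℓ q.1 q.2 = 0
  · simp [hd q hF]
  · have hs : symbol μ ℓ q ≠ 0 := by simp [symbol, hF, Real.pi_ne_zero]
    simp [hs]

theorem lindstedtLHS_cosPoly_injective {μ : ℝ} {A : Fin ℓ → ℝ}
    (hω0 : ∀ i, omega0 μ ℓ i ≠ 0) (hker : ∀ i, Fres μ ℓ (kernelMode i).1 (kernelMode i).2 = 0)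
    (hA : ∀ i, A i ≠ 0) {ω₁ ω₂ : Fin ℓ → ℝ} {c₁ c₂ : (Fin ℓ → ℤ) × ℤ →₀ ℝ}
    (hc₁ : ∀ q ∈ c₁.support, Fres μ ℓ q.1 q.2 ≠ 0) (hc₂ : ∀ q ∈ c₂.support, Fres μ ℓ q.1 q.2 ≠ 0)
    (h : lindstedtLHS μ ω₁ A (cosPoly c₁) = lindstedtLHS μ ω₂ A (cosPoly c₂)) :
    ω₁ = ω₂ ∧ cosPoly c₁ = cosPoly c₂ := by
  rw [lindstedtLHS_cosPoly, lindstedtLHS_cosPoly, ← sub_eq_zero, ← map_sub, add_sub_add_comm,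
    ← smul_sub (symbol μ ℓ) c₁ c₂, kernelCoeff_sub] at h
  obtain rfl : ω₁ = ω₂ := funext fun i => by
    have hβ := congrFun (kernelCoeff_eq_zero_of_cosPoly_eq_zero hker h) i
    have hne : 8 * π ^ 2 * omega0 μ ℓ i * A i ≠ 0 :=
      mul_ne_zero (mul_ne_zero (by positivity) (hω0 i)) (hA i)
    simp only [Pi.sub_apply, Pi.zero_apply] at hβ
    exact mul_left_cancel₀ hne (by linear_combination -hβ)
  refine ⟨rfl, sub_eq_zero.1 ?_⟩
  simp only [sub_self, kernelCoeff, Pi.zero_apply, Finsupp.single_zero, sum_const_zero,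
    add_zero] at h
  rw [← map_sub]
  refine cosPoly_eq_zero_of_cosPoly_symbol_smul_eq_zero (fun q hF => ?_) h
  simp [Finsupp.notMem_support_iff.1 fun hq => hc₁ q hq hF,
    Finsupp.notMem_support_iff.1 fun hq => hc₂ q hq hF]

end Lindstedt

open Lindstedt Finset in
theorem lindstedt_inductive_step_general
    (μ : ℝ)
    (ℓ : ℕ)
    (hchar : ∀ j : ℕ, 1 ≤ j → (0 < 1 - 4 * π ^ 2 * μ * (j : ℝ) ^ 2 ↔ j ≤ ℓ))
    (A : Fin ℓ → ℝ) (hA : ∀ i, A i ≠ 0)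
    (R : (Fin ℓ → ℝ) → ℝ → ℝ)
    (ΛR : Finset ((Fin ℓ → ℤ) × ℕ)) (cR : (Fin ℓ → ℤ) × ℕ → ℝ)
    (hRrep : ∀ θ x, R θ x = ∑ p ∈ ΛR,
      cR p * Real.cos (2 * π * ∑ i, (p.1 i : ℝ) * θ i) * Real.cos (2 * π * (p.2 : ℝ) * x))
    (hFR : ∀ p ∈ ΛR, ¬ ExcMode ℓ p.1 (p.2 : ℤ) → Fres μ ℓ p.1 (p.2 : ℤ) ≠ 0) :
    ∃ (ω' : Fin ℓ → ℝ) (U : (Fin ℓ → ℝ) → ℝ → ℝ),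
      (IsNonresonantTrigPoly μ ℓ U ∧
        ∀ θ x,
          thetaD (omega0 μ ℓ) (thetaD (omega0 μ ℓ) U) θ x - xD (xD U) θ x
            - μ * xD (xD (xD (xD U))) θ x
            + 2 * thetaD ω' (thetaD (omega0 μ ℓ) (lindU1 A)) θ x = R θ x) ∧
      ∀ (ω'' : Fin ℓ → ℝ) (U'' : (Fin ℓ → ℝ) → ℝ → ℝ),
        IsNonresonantTrigPoly μ ℓ U'' →
        (∀ θ x,
          thetaD (omega0 μ ℓ) (thetaD (omega0 μ ℓ) U'') θ x - xD (xD U'') θ x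
            - μ * xD (xD (xD (xD U''))) θ x
            + 2 * thetaD ω'' (thetaD (omega0 μ ℓ) (lindU1 A)) θ x = R θ x) →
        ω'' = ω' ∧ ∀ θ x, U'' θ x = U θ x := by
  have hpos (i : Fin ℓ) : 0 < 1 - 4 * π ^ 2 * μ * ((i : ℕ) + 1 : ℝ) ^ 2 := by
    exact_mod_cast (hchar (i + 1) (by omega)).2 i.2
  set r := ∑ p ∈ ΛR, Finsupp.single (p.1, (p.2 : ℤ)) (cR p)
  have hR : R = cosPoly r := funext₂ fun θ x => by
    simp [hRrep, r, cosPoly_sum_single, mode, phase_apply, mul_assoc]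
  have hr (q) (hq : q ∈ r.support) (hF : Fres μ ℓ q.1 q.2 = 0) : ExcMode ℓ q.1 q.2 := by
    obtain ⟨p, hp, rfl⟩ := mem_image.1 (Finsupp.support_sum_single_subset _ _ _ hq)
    by_contra hexc
    exact hFR p hp hexc hF
  obtain ⟨ω, c, hc, hωc⟩ := exists_lindstedtLHS_cosPoly_eq (omega0_ne_zero hpos) hA hr
  refine ⟨ω, cosPoly c, ⟨isNonresonantTrigPoly_iff.2 ⟨c, hc, rfl⟩, congrFun₂ (hωc.trans hR.symm)⟩,
    fun ω'' U'' hU'' hω'' => ?_⟩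
  obtain ⟨c'', hc'', rfl⟩ := isNonresonantTrigPoly_iff.1 hU''
  obtain ⟨rfl, hcc⟩ := lindstedtLHS_cosPoly_injective (omega0_ne_zero hpos) (Fres_kernelMode hpos)
    hA hc'' hc ((funext₂ hω'').trans (hR.trans hωc.symm))
  exact ⟨rfl, congrFun₂ hcc⟩

/-- The inductive step of the Lindstedt construction for the Boussinesq equation:
the order-`m` equation `M₀U + 2(ω'·∂_θ)(ω⁰·∂_θ)U₁ = R` has a unique solution
`(ω', U)`, with `U` unique among finite combinations of non-resonant cosine modes. -/
theorem lindstedt_inductive_step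
    (μ : ℝ) (hμ : 0 < μ)
    (hnz : ∀ j : ℕ, 1 ≤ j → 1 - 4 * π ^ 2 * μ * (j : ℝ) ^ 2 ≠ 0)
    (ℓ : ℕ) (hℓ : 1 ≤ ℓ)
    (hchar : ∀ j : ℕ, 1 ≤ j → (0 < 1 - 4 * π ^ 2 * μ * (j : ℝ) ^ 2 ↔ j ≤ ℓ))
    (A : Fin ℓ → ℝ) (hA : ∀ i, A i ≠ 0)
    (R : (Fin ℓ → ℝ) → ℝ → ℝ)
    (ΛR : Finset ((Fin ℓ → ℤ) × ℕ)) (cR : (Fin ℓ → ℤ) × ℕ → ℝ)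
    (hjR : ∀ p ∈ ΛR, 1 ≤ p.2)
    (hRrep : ∀ θ x, R θ x = ∑ p ∈ ΛR,
      cR p * Real.cos (2 * π * ∑ i, (p.1 i : ℝ) * θ i) * Real.cos (2 * π * (p.2 : ℝ) * x))
    (hFR : ∀ p ∈ ΛR, ¬ ExcMode ℓ p.1 (p.2 : ℤ) → Fres μ ℓ p.1 (p.2 : ℤ) ≠ 0) :
    ∃ (ω' : Fin ℓ → ℝ) (U : (Fin ℓ → ℝ) → ℝ → ℝ),
      (IsNonresonantTrigPoly μ ℓ U ∧
        ∀ θ x,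
          thetaD (omega0 μ ℓ) (thetaD (omega0 μ ℓ) U) θ x - xD (xD U) θ x
            - μ * xD (xD (xD (xD U))) θ x
            + 2 * thetaD ω' (thetaD (omega0 μ ℓ) (lindU1 A)) θ x = R θ x) ∧
      ∀ (ω'' : Fin ℓ → ℝ) (U'' : (Fin ℓ → ℝ) → ℝ → ℝ),
        IsNonresonantTrigPoly μ ℓ U'' →
        (∀ θ x,
          thetaD (omega0 μ ℓ) (thetaD (omega0 μ ℓ) U'') θ x - xD (xD U'') θ x
            - μ * xD (xD (xD (xD U''))) θ x
            + 2 * thetaD ω'' (thetaD (omega0 μ ℓ) (lindU1 A)) θ x = R θ x) →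
        ω'' = ω' ∧ ∀ θ x, U'' θ x = U θ x :=
  lindstedt_inductive_step_general μ ℓ hchar A hA R ΛR cR hRrep hFR
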